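/- Let f : [0,1] → ℝ be continuous and P : ℝ → ℝ be smooth with exactly finitely many zeros x₁, …, xₙ. Consider the differential equation x' = f(t)P(x) on [0,1]. (i) If ∫₀¹ f(t) dt = 0, then each constant solution x ≡ xᵢ is a center: every solution with initial condition sufficiently close to xᵢ is defined on [0,1] and satisfies x(1) = x(0). (ii) If ∫₀¹ f(t) dt ≠ 0, then the only periodic orbits are the constant solutions x ≡ xᵢ, i = 1, …, n; moreover, if xᵢ is a simple zero of P (i.e. P'(xᵢ) ≠ 0), then the constant periodic orbit x ≡ xᵢ is hyperbolic, i.e. P'(xᵢ)·∫₀¹ f(t) dt ≠ 0. -/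

import Mathlib

open Set Real MeasureTheory intervalIntegral

/-- `γ : ℝ → ℝ` solves the separable equation `x' = f(t)P(x)` on `[0,1]`. -/
def IsSeparableSolution (f : ℝ → ℝ) (P : ℝ → ℝ) (γ : ℝ → ℝ) : Prop :=
  ∀ t ∈ Set.Icc (0:ℝ) 1,
    HasDerivWithinAt γ (f t * P (γ t)) (Set.Icc (0:ℝ) 1) t

/-- Clamped continuous extension of a function continuous on `[0,1]`. -/
lemma exists_continuous_extension (f : ℝ → ℝ) (hf : ContinuousOn f (Icc 0 1)) :
    ∃ g : ℝ → ℝ, Continuous g ∧ EqOn g f (Icc 0 1) ∧ ∃ C, ∀ t, |g t| ≤ C := by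
  obtain ⟨C, hC⟩ := (isCompact_Icc (a := (0:ℝ)) (b := 1)).exists_bound_of_continuousOn hf
  refine ⟨fun t => f (max 0 (min 1 t)), ?_, ?_, C, ?_⟩
  · apply hf.comp_continuous (continuous_const.max (continuous_const.min continuous_id))
    intro t
    exact ⟨le_max_left _ _, max_le zero_le_one (min_le_left _ _)⟩
  · intro t ht
    simp only [min_eq_right ht.2, max_eq_right ht.1]
  · intro t
    have : max 0 (min 1 t) ∈ Icc (0:ℝ) 1 :=
      ⟨le_max_left _ _, max_le zero_le_one (min_le_left _ _)⟩
    simpa using hC _ this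

/-- Key integral comparison: if `0 < P y ≤ K (y - z)` on `[u, m]`, then
`∫_u^m 1/P ≥ (log(m-z) - log(u-z))/K`. -/
lemma integral_inv_ge_log (P : ℝ → ℝ) (z Kr u m : ℝ) (hK : 0 < Kr)
    (hzu : z < u) (hum : u ≤ m)
    (hPpos : ∀ y ∈ Icc u m, 0 < P y)
    (hPbound : ∀ y ∈ Icc u m, P y ≤ Kr * (y - z))
    (hPcont : ContinuousOn P (Icc u m)) :
    (Real.log (m - z) - Real.log (u - z)) / Kr ≤ ∫ y in u..m, (P y)⁻¹ := by
  have huIcc : uIcc u m = Icc u m := uIcc_of_le hum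
  have hint1 : IntervalIntegrable (fun y => (P y)⁻¹) volume u m := by
    apply ContinuousOn.intervalIntegrable
    rw [huIcc]
    exact hPcont.inv₀ fun y hy => (hPpos y hy).ne'
  have hint2 : IntervalIntegrable (fun y => (Kr * (y - z))⁻¹) volume u m := by
    apply ContinuousOn.intervalIntegrable
    rw [huIcc]
    apply ContinuousOn.inv₀ (by fun_prop)
    intro y hy
    have hy1 : z < y := lt_of_lt_of_le hzu hy.1
    have : 0 < Kr * (y - z) := mul_pos hK (by linarith)
    exact this.ne'
  have hle : ∀ y ∈ Icc u m, (Kr * (y - z))⁻¹ ≤ (P y)⁻¹ := by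
    intro y hy
    have h1 : 0 < P y := hPpos y hy
    exact inv_anti₀ h1 (hPbound y hy)
  have hmono := intervalIntegral.integral_mono_on hum hint2 hint1 hle
  refine le_trans (le_of_eq ?_) hmono
  have hcalc : (∫ y in u..m, (Kr * (y - z))⁻¹) = Kr⁻¹ * ∫ y in u..m, (y - z)⁻¹ := by
    simp_rw [mul_inv]
    exact intervalIntegral.integral_const_mul _ _
  have hshift : (∫ y in u..m, (y - z)⁻¹) = ∫ x in (u - z)..(m - z), x⁻¹ :=
    intervalIntegral.integral_comp_sub_right (fun x => x⁻¹) z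
  have h0 : (0:ℝ) ∉ uIcc (u - z) (m - z) := by
    rw [uIcc_of_le (by linarith)]
    intro h0
    have := h0.1
    linarith
  rw [hcalc, hshift, integral_inv h0,
    Real.log_div (by linarith : (0:ℝ) < m - z).ne' (by linarith : (0:ℝ) < u - z).ne']
  field_simp

lemma hasDeriv_Ici_of_Icc {γ : ℝ → ℝ} {d t : ℝ}
    (h : HasDerivWithinAt γ d (Icc (0:ℝ) 1) t) (h0 : 0 ≤ t) (h1 : t < 1) :
    HasDerivWithinAt γ d (Ici t) t := by
  have h' : HasDerivWithinAt γ d (Icc t 1) t := h.mono (Icc_subset_Icc h0 le_rfl)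
  exact h'.mono_of_mem_nhdsWithin (Icc_mem_nhdsGE h1)

lemma hasDeriv_Iic_of_Icc {γ : ℝ → ℝ} {d t : ℝ}
    (h : HasDerivWithinAt γ d (Icc (0:ℝ) 1) t) (h0 : 0 < t) (h1 : t ≤ 1) :
    HasDerivWithinAt γ d (Iic t) t := by
  have h' : HasDerivWithinAt γ d (Icc 0 t) t := h.mono (Icc_subset_Icc le_rfl h1)
  exact h'.mono_of_mem_nhdsWithin (Icc_mem_nhdsLE h0)

lemma center_core_pos (f P : ℝ → ℝ) (hf : Continuous f)
    (hf0 : (∫ t in (0:ℝ)..1, f t) = 0) (hP : ContDiff ℝ (⊤ : ℕ∞) P)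
    (z δ : ℝ) (hδ : 0 < δ) (hPz : P z = 0)
    (hpos : ∀ u ∈ Set.Ioo z (z + δ), 0 < P u) :
    ∃ ε > 0, ∀ ρ ∈ Set.Ioo z (z + ε),
      ∃ γ : ℝ → ℝ, IsSeparableSolution f P γ ∧ γ 0 = ρ ∧ γ 0 = γ 1 := by
  classical
  set b := z + δ with hb
  set m := z + δ/2 with hm
  set b₀ := z + δ/4 with hb₀def
  have hPcont : Continuous P := hP.continuous
  -- a linear bound on P near z
  obtain ⟨C, hC⟩ : ∃ C, ∀ y ∈ Icc z b, |deriv P y| ≤ C := by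
    obtain ⟨C, hC⟩ := (isCompact_Icc (a := z) (b := b)).exists_bound_of_continuousOn
      ((hP.continuous_deriv (by simp)).continuousOn)
    exact ⟨C, fun y hy => by simpa using hC y hy⟩
  set Kr := max C 1 with hKrdef
  have hKrpos : (0:ℝ) < Kr := lt_of_lt_of_le one_pos (le_max_right _ _)
  have hbound : ∀ u ∈ Icc z b, P u ≤ Kr * (u - z) := by
    intro u hu
    have hdiff : ∀ y ∈ Icc z b, DifferentiableAt ℝ P y :=
      fun y _ => (hP.differentiable (by simp)) y
    have hmvt := Convex.norm_image_sub_le_of_norm_deriv_le (𝕜 := ℝ) (f := P) (s := Icc z b)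
      (C := Kr) hdiff
      (fun y hy => by rw [Real.norm_eq_abs]; exact le_trans (hC y hy) (le_max_left _ _))
      (convex_Icc _ _)
      (left_mem_Icc.2 (by rw [hb]; linarith)) hu
    rw [hPz, sub_zero, Real.norm_eq_abs, Real.norm_eq_abs] at hmvt
    calc P u ≤ |P u| := le_abs_self _
      _ ≤ Kr * |u - z| := hmvt
      _ = Kr * (u - z) := by rw [abs_of_nonneg (by linarith [hu.1])]
  set g : ℝ → ℝ := fun u => ∫ y in m..u, (P y)⁻¹ with hgdef
  have hIoo : OrdConnected (Ioo z b) := ordConnected_Ioo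
  have hmmem : m ∈ Ioo z b := ⟨by rw [hm]; linarith, by rw [hm, hb]; linarith⟩
  have hb₀mem : b₀ ∈ Ioo z b := ⟨by rw [hb₀def]; linarith, by rw [hb₀def, hb]; linarith⟩
  have hb₀m : b₀ < m := by rw [hb₀def, hm]; linarith
  have hg1 : ∀ u ∈ Ioo z b, HasDerivAt g (P u)⁻¹ u := by
    intro u hu
    have hsub : uIcc m u ⊆ Ioo z b := hIoo.uIcc_subset hmmem hu
    have hcont : ContinuousOn (fun y => (P y)⁻¹) (uIcc m u) :=
      (hPcont.continuousOn.inv₀ fun y hy => (hpos y (hsub hy)).ne')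
    refine intervalIntegral.integral_hasDerivAt_right hcont.intervalIntegrable ?_ ?_
    · exact ContinuousAt.stronglyMeasurableAtFilter isOpen_Ioo
        (fun y hy => (hPcont.continuousAt).inv₀ (hpos y hy).ne') u hu
    · exact (hPcont.continuousAt).inv₀ (hpos u hu).ne'
  have hgcont : ContinuousOn g (Ioo z b) :=
    fun u hu => (hg1 u hu).continuousAt.continuousWithinAt
  have hgmono : StrictMonoOn g (Ioo z b) := by
    apply strictMonoOn_of_hasDerivWithinAt_pos (convex_Ioo _ _) hgcont
      (f' := fun u => (P u)⁻¹)
    · intro u hu; rw [interior_Ioo] at hu; exact (hg1 u hu).hasDerivWithinAt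
    · intro u hu; rw [interior_Ioo] at hu; exact inv_pos.2 (hpos u hu)
  have hglog : ∀ u, z < u → u ≤ m → g u ≤ (Real.log (u - z) - Real.log (δ / 2)) / Kr := by
    intro u hzu hum
    have hIccsub : Icc u m ⊆ Ioo z b := fun y hy =>
      ⟨lt_of_lt_of_le hzu hy.1, lt_of_le_of_lt hy.2 (by rw [hm, hb]; linarith)⟩
    have hkey := integral_inv_ge_log P z Kr u m hKrpos hzu hum
      (fun y hy => hpos y (hIccsub hy))
      (fun y hy => hbound y (Ioo_subset_Icc_self (hIccsub hy)))
      hPcont.continuousOn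
    have hsymm : g u = -∫ y in u..m, (P y)⁻¹ := by
      rw [hgdef]; exact intervalIntegral.integral_symm u m
    have hmz : m - z = δ / 2 := by rw [hm]; ring
    rw [hmz] at hkey
    have hring : -((Real.log (δ/2) - Real.log (u - z)) / Kr)
        = (Real.log (u - z) - Real.log (δ/2)) / Kr := by ring
    linarith
  set F : ℝ → ℝ := fun t => ∫ s in (0:ℝ)..t, f s with hFdef
  have hFderiv : ∀ t : ℝ, HasDerivAt F (f t) t := by
    intro t
    exact intervalIntegral.integral_hasDerivAt_right (hf.intervalIntegrable 0 t)
      hf.stronglyMeasurable.stronglyMeasurableAtFilter hf.continuousAt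
  have hFcont : Continuous F := by
    rw [continuous_iff_continuousAt]; exact fun t => (hFderiv t).continuousAt
  obtain ⟨M, hM⟩ : ∃ M, ∀ t ∈ Icc (0:ℝ) 1, |F t| ≤ M := by
    obtain ⟨M, hM⟩ := (isCompact_Icc (a := (0:ℝ)) (b := 1)).exists_bound_of_continuousOn
      hFcont.continuousOn
    exact ⟨M, fun t ht => by simpa using hM t ht⟩
  have hF0 : F 0 = 0 := intervalIntegral.integral_same
  have hF1 : F 1 = 0 := hf0
  have hM0 : 0 ≤ M := le_trans (abs_nonneg _) (hM 0 (by norm_num))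
  refine ⟨min (δ/8) ((δ/2) * Real.exp (Kr * (g b₀ - M))), by positivity, ?_⟩
  intro ρ hρ
  have hρz : z < ρ := hρ.1
  have hρε : ρ - z < min (δ/8) ((δ/2) * Real.exp (Kr * (g b₀ - M))) := by
    have := hρ.2; linarith
  have hρδ : ρ - z < δ/8 := lt_of_lt_of_le hρε (min_le_left _ _)
  have hρb₀ : ρ < b₀ := by rw [hb₀def]; linarith
  have hρm : ρ < m := lt_trans hρb₀ hb₀m
  have hρmem : ρ ∈ Ioo z b := ⟨hρz, lt_trans hρm hmmem.2⟩
  have hgρ : g ρ + M < g b₀ := by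
    have h1 : g ρ ≤ (Real.log (ρ - z) - Real.log (δ/2)) / Kr := hglog ρ hρz hρm.le
    have h2 : Real.log (ρ - z) < Real.log ((δ/2) * Real.exp (Kr * (g b₀ - M))) :=
      Real.log_lt_log (by linarith) (lt_of_lt_of_le hρε (min_le_right _ _))
    rw [Real.log_mul (by positivity) (Real.exp_ne_zero _), Real.log_exp] at h2
    have h3 : (Real.log (ρ - z) - Real.log (δ/2)) / Kr < (Kr * (g b₀ - M)) / Kr :=
      (div_lt_div_iff_of_pos_right hKrpos).mpr (by linarith)
    have h4 : Kr * (g b₀ - M) / Kr = g b₀ - M := by field_simp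
    linarith
  set a' := min (ρ - z) ((δ/2) * Real.exp (Kr * (g ρ - M))) with ha'def
  have ha'pos : 0 < a' := lt_min (by linarith) (by positivity)
  have ha'ρ : a' ≤ ρ - z := min_le_left _ _
  set a := z + a'/2 with hadef
  set a₂ := z + a'/4 with ha₂def
  have hza : z < a := by rw [hadef]; linarith
  have haρ : a < ρ := by rw [hadef]; linarith
  have hza₂ : z < a₂ := by rw [ha₂def]; linarith
  have ha₂a : a₂ < a := by rw [ha₂def, hadef]; linarith
  have hamem : a ∈ Ioo z b := ⟨hza, lt_trans (lt_trans haρ hρm) hmmem.2⟩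
  have hga : g a < g ρ - M := by
    have hamz : a - z = a'/2 := by rw [hadef]; ring
    have h1 : g a ≤ (Real.log (a'/2) - Real.log (δ/2)) / Kr := by
      have := hglog a hza (le_of_lt (lt_trans haρ hρm))
      rwa [hamz] at this
    have h2 : Real.log (a'/2) < Real.log ((δ/2) * Real.exp (Kr * (g ρ - M))) := by
      apply Real.log_lt_log (by positivity)
      calc a'/2 < a' := by linarith
        _ ≤ _ := min_le_right _ _
    rw [Real.log_mul (by positivity) (Real.exp_ne_zero _), Real.log_exp] at h2
    have h3 : (Real.log (a'/2) - Real.log (δ/2)) / Kr < (Kr * (g ρ - M)) / Kr :=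
      (div_lt_div_iff_of_pos_right hKrpos).mpr (by linarith)
    have h4 : Kr * (g ρ - M) / Kr = g ρ - M := by field_simp
    linarith
  have hS2 : Icc a₂ m ⊆ Ioo z b := fun y hy =>
    ⟨lt_of_lt_of_le hza₂ hy.1, lt_of_le_of_lt hy.2 hmmem.2⟩
  have hmono2 : StrictMonoOn g (Icc a₂ m) := hgmono.mono hS2
  have hcont2 : ContinuousOn g (Icc a₂ m) := hgcont.mono hS2
  have ha₂m : a₂ ≤ m := le_of_lt (lt_trans (lt_trans ha₂a haρ) hρm)
  have hamem2 : a ∈ Icc a₂ m := ⟨ha₂a.le, le_of_lt (lt_trans haρ hρm)⟩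
  have hb₀mem2 : b₀ ∈ Icc a₂ m := ⟨le_of_lt (lt_trans (lt_trans ha₂a haρ) hρb₀), hb₀m.le⟩
  have hρmem2 : ρ ∈ Icc a₂ m := ⟨le_of_lt (lt_trans ha₂a haρ), hρm.le⟩
  have hga₂a : g a₂ < g a := hmono2 ⟨le_rfl, ha₂m⟩ hamem2 ha₂a
  have hgb₀m : g b₀ < g m := hmono2 hb₀mem2 ⟨ha₂m, le_rfl⟩ hb₀m
  have hval : ∀ t ∈ Icc (0:ℝ) 1, g ρ + F t ∈ Icc (g a) (g b₀) := by
    intro t ht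
    obtain ⟨h1, h2⟩ := abs_le.mp (hM t ht)
    exact ⟨by linarith, by linarith⟩
  have hexists : ∀ v ∈ Icc (g a₂) (g m), ∃ u ∈ Icc a₂ m, g u = v := by
    intro v hv
    obtain ⟨u, hu, hgu⟩ := intermediate_value_Icc ha₂m hcont2 hv
    exact ⟨u, hu, hgu⟩
  set h : ℝ → ℝ := fun v => if hv : ∃ u ∈ Icc a₂ m, g u = v then hv.choose else ρ with hhdef
  have hinv : ∀ v ∈ Icc (g a₂) (g m), h v ∈ Icc a₂ m ∧ g (h v) = v := by
    intro v hv
    have hex := hexists v hv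
    rw [hhdef]
    simp only [dif_pos hex]
    exact ⟨hex.choose_spec.1, hex.choose_spec.2⟩
  have hgmem : ∀ u ∈ Icc a₂ m, g u ∈ Icc (g a₂) (g m) := by
    intro u hu
    exact ⟨hmono2.monotoneOn ⟨le_rfl, ha₂m⟩ hu hu.1, hmono2.monotoneOn hu ⟨ha₂m, le_rfl⟩ hu.2⟩
  have hhg : ∀ u ∈ Icc a₂ m, h (g u) = u := by
    intro u hu
    obtain ⟨hu', hgu'⟩ := hinv (g u) (hgmem u hu)
    exact hmono2.injOn hu' hu hgu'
  have hmonoh : MonotoneOn h (Icc (g a₂) (g m)) := by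
    intro v1 h1 v2 h2 hle
    by_contra hlt
    push_neg at hlt
    have hx := hmono2 (hinv v2 h2).1 (hinv v1 h1).1 hlt
    rw [(hinv v1 h1).2, (hinv v2 h2).2] at hx
    exact absurd hle (not_le.2 hx)
  have himg : Icc a₂ m ⊆ h '' Icc (g a₂) (g m) := by
    intro u hu
    exact ⟨g u, hgmem u hu, hhg u hu⟩
  have hsub_vals : Icc (g a) (g b₀) ⊆ Icc (g a₂) (g m) := Icc_subset_Icc hga₂a.le hgb₀m.le
  refine ⟨fun t => h (g ρ + F t), ?_, ?_, ?_⟩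
  · -- solution property
    intro t ht
    have hvt : g ρ + F t ∈ Icc (g a) (g b₀) := hval t ht
    have hvt2 : g ρ + F t ∈ Icc (g a₂) (g m) := hsub_vals hvt
    obtain ⟨hut, hgut⟩ := hinv _ hvt2
    have hut2 : h (g ρ + F t) ∈ Icc a b₀ := by
      constructor
      · by_contra hlt
        push_neg at hlt
        have hx := hmono2 hut hamem2 hlt
        rw [hgut] at hx
        exact absurd hvt.1 (not_le.2 hx)
      · by_contra hlt
        push_neg at hlt
        have hx := hmono2 hb₀mem2 hut hlt
        rw [hgut] at hx
        exact absurd hvt.2 (not_le.2 hx)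
    have hutIoo : h (g ρ + F t) ∈ Ioo z b :=
      ⟨lt_of_lt_of_le hza hut2.1, lt_of_le_of_lt hut2.2 hb₀mem.2⟩
    have hlow : g a₂ < g ρ + F t := lt_of_lt_of_le hga₂a hvt.1
    have hhigh : g ρ + F t < g m := lt_of_le_of_lt hvt.2 hgb₀m
    have hconth : ContinuousAt h (g ρ + F t) := by
      apply continuousAt_of_monotoneOn_of_image_mem_nhds hmonoh
      · exact Filter.mem_of_superset (Ioo_mem_nhds hlow hhigh) Ioo_subset_Icc_self
      · exact Filter.mem_of_superset
          (Ioo_mem_nhds (lt_of_lt_of_le ha₂a hut2.1) (lt_of_le_of_lt hut2.2 hb₀m))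
          (subset_trans Ioo_subset_Icc_self himg)
    have hev : ∀ᶠ v in nhds (g ρ + F t), g (h v) = v :=
      Filter.eventually_of_mem (Ioo_mem_nhds hlow hhigh)
        (fun v hv => (hinv v (Ioo_subset_Icc_self hv)).2)
    have hDh : HasDerivAt h ((P (h (g ρ + F t)))⁻¹)⁻¹ (g ρ + F t) :=
      HasDerivAt.of_local_left_inverse hconth (hg1 _ hutIoo)
        (inv_ne_zero (hpos _ hutIoo).ne') hev
    rw [inv_inv] at hDh
    have hinner : HasDerivAt (fun s => g ρ + F s) (f t) t := (hFderiv t).const_add (g ρ)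
    have hcomp := hDh.comp t hinner
    have hfin : HasDerivAt (fun s => h (g ρ + F s)) (P (h (g ρ + F t)) * f t) t := hcomp
    rw [mul_comm]
    exact hfin.hasDerivWithinAt
  · show h (g ρ + F 0) = ρ
    rw [hF0, add_zero]
    exact hhg ρ hρmem2
  · show h (g ρ + F 0) = h (g ρ + F 1)
    rw [hF0, hF1]

/-- Version for `P` of either constant sign on the right of `z`. -/
lemma center_core_right (f P : ℝ → ℝ) (hf : Continuous f)
    (hf0 : (∫ t in (0:ℝ)..1, f t) = 0) (hP : ContDiff ℝ (⊤ : ℕ∞) P)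
    (z δ : ℝ) (hδ : 0 < δ) (hPz : P z = 0)
    (hne : ∀ u ∈ Set.Ioo z (z + δ), P u ≠ 0) :
    ∃ ε > 0, ∀ ρ ∈ Set.Ioo z (z + ε),
      ∃ γ : ℝ → ℝ, IsSeparableSolution f P γ ∧ γ 0 = ρ ∧ γ 0 = γ 1 := by
  have hsign : (∀ u ∈ Set.Ioo z (z + δ), 0 < P u) ∨ (∀ u ∈ Set.Ioo z (z + δ), P u < 0) := by
    by_contra hcon
    push_neg at hcon
    obtain ⟨⟨u₁, hu₁, h1⟩, ⟨u₂, hu₂, h2⟩⟩ := hcon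
    have h1' : P u₁ < 0 := lt_of_le_of_ne h1 (hne u₁ hu₁)
    have h2' : 0 < P u₂ := lt_of_le_of_ne h2 (Ne.symm (hne u₂ hu₂))
    have hsub : uIcc u₁ u₂ ⊆ Ioo z (z + δ) := (ordConnected_Ioo).uIcc_subset hu₁ hu₂
    have h0mem : (0:ℝ) ∈ uIcc (P u₁) (P u₂) := by
      rw [Set.mem_uIcc]; left; exact ⟨h1'.le, h2'.le⟩
    obtain ⟨y, hy, hPy⟩ := intermediate_value_uIcc
      (hP.continuous.continuousOn (s := uIcc u₁ u₂)) h0mem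
    exact hne y (hsub hy) hPy
  rcases hsign with hsign | hsign
  · exact center_core_pos f P hf hf0 hP z δ hδ hPz hsign
  · obtain ⟨ε, hε, hεs⟩ := center_core_pos (fun t => -f t) (fun y => -P y)
      hf.neg (by rw [intervalIntegral.integral_neg, hf0, neg_zero]) hP.neg z δ hδ
      (by simp [hPz]) (fun u hu => neg_pos.2 (hsign u hu))
    refine ⟨ε, hε, fun ρ hρ => ?_⟩
    obtain ⟨γ, hγsol, hγ0, hγper⟩ := hεs ρ hρ
    refine ⟨γ, fun t ht => ?_, hγ0, hγper⟩
    have := hγsol t ht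
    simpa [neg_mul_neg] using this

/-- Version for the left side of `z`. -/
lemma center_core_left (f P : ℝ → ℝ) (hf : Continuous f)
    (hf0 : (∫ t in (0:ℝ)..1, f t) = 0) (hP : ContDiff ℝ (⊤ : ℕ∞) P)
    (z δ : ℝ) (hδ : 0 < δ) (hPz : P z = 0)
    (hne : ∀ u ∈ Set.Ioo (z - δ) z, P u ≠ 0) :
    ∃ ε > 0, ∀ ρ ∈ Set.Ioo (z - ε) z,
      ∃ γ : ℝ → ℝ, IsSeparableSolution f P γ ∧ γ 0 = ρ ∧ γ 0 = γ 1 := by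
  set Q : ℝ → ℝ := fun y => -P (2 * z - y) with hQdef
  have hQ : ContDiff ℝ (⊤ : ℕ∞) Q :=
    (hP.comp ((contDiff_const (c := 2 * z)).sub contDiff_id)).neg
  have hQz : Q z = 0 := by simp [hQdef, show 2 * z - z = z by ring, hPz]
  have hQne : ∀ u ∈ Set.Ioo z (z + δ), Q u ≠ 0 := by
    intro u hu
    have : 2 * z - u ∈ Set.Ioo (z - δ) z := ⟨by linarith [hu.2], by linarith [hu.1]⟩
    simpa [hQdef] using hne _ this
  obtain ⟨ε, hε, hεs⟩ := center_core_right f Q hf hf0 hQ z δ hδ hQz hQne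
  refine ⟨ε, hε, fun ρ hρ => ?_⟩
  have hρ' : 2 * z - ρ ∈ Set.Ioo z (z + ε) := ⟨by linarith [hρ.2], by linarith [hρ.1]⟩
  obtain ⟨γ', hγsol, hγ0, hγper⟩ := hεs (2 * z - ρ) hρ'
  refine ⟨fun t => 2 * z - γ' t, fun t ht => ?_,
    by show 2 * z - γ' 0 = ρ; rw [hγ0]; ring,
    by show 2 * z - γ' 0 = 2 * z - γ' 1; rw [hγper]⟩
  have hd := (hγsol t ht).const_sub (2 * z)
  have heq : -(f t * Q (γ' t)) = f t * P (2 * z - γ' t) := by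
    simp [hQdef]
  rwa [heq] at hd

/-- Uniqueness: a solution hitting a zero of `P` is constant. -/
lemma eq_const_of_hits_zero (f P γ : ℝ → ℝ) (hf : Continuous f) (Cf : ℝ)
    (hCf : ∀ t, |f t| ≤ Cf) (hP : ContDiff ℝ (⊤ : ℕ∞) P)
    (hsol : ∀ t ∈ Icc (0:ℝ) 1, HasDerivWithinAt γ (f t * P (γ t)) (Icc (0:ℝ) 1) t)
    (t₀ : ℝ) (ht₀ : t₀ ∈ Icc (0:ℝ) 1) (c : ℝ) (hc : P c = 0) (hγt₀ : γ t₀ = c) :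
    ∀ t ∈ Icc (0:ℝ) 1, γ t = c := by
  have hγcont : ContinuousOn γ (Icc 0 1) := fun t ht => (hsol t ht).continuousWithinAt
  obtain ⟨R0, hR0⟩ := (isCompact_Icc (a := (0:ℝ)) (b := 1)).exists_bound_of_continuousOn hγcont
  set R := max R0 |c| with hRdef
  have hR0' : (0:ℝ) ≤ R := le_trans (abs_nonneg c) (le_max_right _ _)
  have hγR : ∀ t ∈ Icc (0:ℝ) 1, γ t ∈ Icc (-R) R := by
    intro t ht
    have := hR0 t ht
    rw [Real.norm_eq_abs, abs_le] at this
    constructor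
    · linarith [this.1, le_max_left R0 |c|]
    · exact le_trans this.2 (le_max_left _ _)
  have hcR : c ∈ Icc (-R) R := by
    rw [mem_Icc, ← abs_le]; exact le_max_right _ _
  obtain ⟨CP, hCP⟩ : ∃ CP, ∀ y ∈ Icc (-R) R, |deriv P y| ≤ CP := by
    obtain ⟨CP, hCP⟩ := (isCompact_Icc (a := -R) (b := R)).exists_bound_of_continuousOn
      ((hP.continuous_deriv (by simp)).continuousOn)
    exact ⟨CP, fun y hy => by simpa using hCP y hy⟩
  have hCf0 : 0 ≤ Cf := le_trans (abs_nonneg _) (hCf 0)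
  have hCP0 : 0 ≤ CP := le_trans (abs_nonneg _) (hCP R ⟨by linarith, le_rfl⟩)
  set K : NNReal := Real.toNNReal (Cf * CP) with hKdef
  have hv : ∀ t, LipschitzOnWith K (fun y => f t * P y) (Icc (-R) R) := by
    intro t
    rw [lipschitzOnWith_iff_dist_le_mul]
    intro y1 h1 y2 h2
    have hmvt := Convex.norm_image_sub_le_of_norm_deriv_le (𝕜 := ℝ) (f := P)
      (s := Icc (-R) R) (C := CP)
      (fun y _ => (hP.differentiable (by simp)) y) (fun y hy => by
        rw [Real.norm_eq_abs]; exact hCP y hy) (convex_Icc _ _) h2 h1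
    rw [Real.dist_eq, Real.dist_eq]
    have hK : (K : ℝ) = max (Cf * CP) 0 := Real.coe_toNNReal' _
    rw [hK, max_eq_left (by positivity)]
    calc |f t * P y1 - f t * P y2| = |f t| * |P y1 - P y2| := by
          rw [← abs_mul]; ring_nf
      _ ≤ Cf * (CP * |y1 - y2|) := by
          apply mul_le_mul (hCf t) ?_ (abs_nonneg _) hCf0
          simpa [Real.norm_eq_abs] using hmvt
      _ = Cf * CP * |y1 - y2| := by ring
  have hright : EqOn γ (fun _ => c) (Icc t₀ 1) := by
    apply ODE_solution_unique_of_mem_Icc_right (v := fun t y => f t * P y)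
      (s := fun _ => Icc (-R) R) (fun t _ => hv t)
      (hγcont.mono (Icc_subset_Icc ht₀.1 le_rfl))
      (fun t ht => hasDeriv_Ici_of_Icc (hsol t ⟨le_trans ht₀.1 ht.1, ht.2.le⟩)
        (le_trans ht₀.1 ht.1) ht.2)
      (fun t ht => hγR t ⟨le_trans ht₀.1 ht.1, ht.2.le⟩)
      continuousOn_const
      (fun t _ => by
        show HasDerivWithinAt (fun _ => c) (f t * P c) (Ici t) t
        rw [hc, mul_zero]
        exact hasDerivWithinAt_const _ _ _)
      (fun t _ => hcR) hγt₀
  have hleft : EqOn γ (fun _ => c) (Icc 0 t₀) := by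
    apply ODE_solution_unique_of_mem_Icc_left (v := fun t y => f t * P y)
      (s := fun _ => Icc (-R) R) (fun t _ => hv t)
      (hγcont.mono (Icc_subset_Icc le_rfl ht₀.2))
      (fun t ht => hasDeriv_Iic_of_Icc (hsol t ⟨ht.1.le, le_trans ht.2 ht₀.2⟩)
        ht.1 (le_trans ht.2 ht₀.2))
      (fun t ht => hγR t ⟨ht.1.le, le_trans ht.2 ht₀.2⟩)
      continuousOn_const
      (fun t _ => by
        show HasDerivWithinAt (fun _ => c) (f t * P c) (Iic t) t
        rw [hc, mul_zero]
        exact hasDerivWithinAt_const _ _ _)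
      (fun t _ => hcR) hγt₀
  intro t ht
  rcases le_total t t₀ with h | h
  · exact hleft ⟨ht.1, h⟩
  · exact hright ⟨h, ht.2⟩

/-- If a periodic solution never meets a zero of `P`, then `∫ f = 0`. -/
lemma integral_eq_zero_of_periodic (f P γ : ℝ → ℝ) (hf : Continuous f) (hP : Continuous P)
    (hsol : ∀ t ∈ Icc (0:ℝ) 1, HasDerivWithinAt γ (f t * P (γ t)) (Icc (0:ℝ) 1) t)
    (hper : γ 0 = γ 1) (hne : ∀ t ∈ Icc (0:ℝ) 1, P (γ t) ≠ 0) :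
    (∫ t in (0:ℝ)..1, f t) = 0 := by
  have hγcont : ContinuousOn γ (Icc 0 1) := fun t ht => (hsol t ht).continuousWithinAt
  set J : Set ℝ := γ '' Icc 0 1 with hJdef
  have hJconn : IsPreconnected J := (isPreconnected_Icc).image γ hγcont
  have hJord : OrdConnected J := hJconn.ordConnected
  have hJne : ∀ y ∈ J, P y ≠ 0 := by
    rintro y ⟨t, ht, rfl⟩; exact hne t ht
  have hγ0J : γ 0 ∈ J := mem_image_of_mem γ (by norm_num)
  have hU : IsOpen {y : ℝ | P y ≠ 0} := by
    have : {y : ℝ | P y ≠ 0} = P ⁻¹' ({0}ᶜ) := rfl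
    rw [this]
    exact isOpen_compl_singleton.preimage hP
  set F : ℝ → ℝ := fun t => ∫ s in (0:ℝ)..t, f s with hFdef
  have hFderiv : ∀ t : ℝ, HasDerivAt F (f t) t := fun t =>
    intervalIntegral.integral_hasDerivAt_right (hf.intervalIntegrable 0 t)
      hf.stronglyMeasurable.stronglyMeasurableAtFilter hf.continuousAt
  set G : ℝ → ℝ := fun u => ∫ y in (γ 0)..u, (P y)⁻¹ with hGdef
  have hGder : ∀ t ∈ Icc (0:ℝ) 1, HasDerivAt G (P (γ t))⁻¹ (γ t) := by
    intro t ht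
    have hγtJ : γ t ∈ J := mem_image_of_mem γ ht
    have hsub : uIcc (γ 0) (γ t) ⊆ J := hJord.uIcc_subset hγ0J hγtJ
    have hcont : ContinuousOn (fun y => (P y)⁻¹) (uIcc (γ 0) (γ t)) :=
      hP.continuousOn.inv₀ fun y hy => hJne y (hsub hy)
    refine intervalIntegral.integral_hasDerivAt_right hcont.intervalIntegrable ?_ ?_
    · exact ContinuousAt.stronglyMeasurableAtFilter hU
        (fun y hy => hP.continuousAt.inv₀ hy) (γ t) (hne t ht)
    · exact hP.continuousAt.inv₀ (hne t ht)
  set Φ : ℝ → ℝ := fun t => G (γ t) - F t with hΦdef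
  have hΦder : ∀ t ∈ Icc (0:ℝ) 1, HasDerivWithinAt Φ 0 (Icc (0:ℝ) 1) t := by
    intro t ht
    have h1 := (hGder t ht).comp_hasDerivWithinAt t (hsol t ht)
    have h2 := (hFderiv t).hasDerivWithinAt (s := Icc (0:ℝ) 1)
    have h3 := h1.sub h2
    have : (P (γ t))⁻¹ * (f t * P (γ t)) - f t = 0 := by
      field_simp [hne t ht]
      ring
    rwa [this] at h3
  have hΦcont : ContinuousOn Φ (Icc 0 1) := fun t ht => (hΦder t ht).continuousWithinAt
  have hkey := constant_of_has_deriv_right_zero hΦcont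
    (fun t ht => hasDeriv_Ici_of_Icc (hΦder t ⟨ht.1, ht.2.le⟩) ht.1 ht.2) 1 (by norm_num)
  have hG0 : G (γ 0) = 0 := intervalIntegral.integral_same
  have hF0 : F 0 = 0 := intervalIntegral.integral_same
  have hG1 : G (γ 1) = 0 := by rw [← hper]; exact hG0
  have : G (γ 1) - F 1 = G (γ 0) - F 0 := hkey
  rw [hG0, hG1, hF0] at this
  have hF1 : F 1 = 0 := by linarith
  exact hF1

theorem separable_equation_centers_and_periodic_orbits
    (f P : ℝ → ℝ)
    (hf : ContinuousOn f (Set.Icc 0 1))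
    (hP : ContDiff ℝ (⊤ : ℕ∞) P)
    (n : ℕ) (x : Fin n → ℝ)
    (hzeros : ∀ y : ℝ, P y = 0 ↔ ∃ i : Fin n, y = x i) :
    -- (i) if ∫₀¹ f = 0, each constant solution x ≡ xᵢ is a center
    ((∫ t in (0:ℝ)..1, f t) = 0 →
      ∀ i : Fin n, ∃ ε > (0:ℝ), ∀ ρ : ℝ, |ρ - x i| < ε →
        ∃ γ : ℝ → ℝ, IsSeparableSolution f P γ ∧ γ 0 = ρ ∧ γ 0 = γ 1) ∧
    -- (ii) if ∫₀¹ f ≠ 0, the only periodic orbits are the constant solutions x ≡ xᵢ,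
    -- and simple zeros give hyperbolic periodic orbits
    ((∫ t in (0:ℝ)..1, f t) ≠ 0 →
      (∀ γ : ℝ → ℝ, IsSeparableSolution f P γ → γ 0 = γ 1 →
        ∃ i : Fin n, ∀ t ∈ Set.Icc (0:ℝ) 1, γ t = x i) ∧
      (∀ i : Fin n, deriv P (x i) ≠ 0 →
        deriv P (x i) * (∫ t in (0:ℝ)..1, f t) ≠ 0)) := by
  classical
  obtain ⟨g, hgc, hgeq, Cg, hCg⟩ := exists_continuous_extension f hf
  have hint_eq : (∫ t in (0:ℝ)..1, g t) = ∫ t in (0:ℝ)..1, f t := by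
    apply intervalIntegral.integral_congr
    rwa [uIcc_of_le (by norm_num : (0:ℝ) ≤ 1)]
  constructor
  · -- part (i)
    intro hf0 i
    set z := x i with hzdef
    have hPz : P z = 0 := (hzeros z).mpr ⟨i, rfl⟩
    have hg0 : (∫ t in (0:ℝ)..1, g t) = 0 := by rw [hint_eq, hf0]
    -- a zero-free punctured neighborhood of z
    set S : Finset (Fin n) := Finset.univ.filter (fun j : Fin n => x j ≠ z) with hSdef
    set δ : ℝ := if hS : S.Nonempty then S.inf' hS (fun j => |x j - z|) else 1 with hδdef
    have hδpos : 0 < δ := by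
      rw [hδdef]
      split_ifs with hS
      · rw [Finset.lt_inf'_iff]
        intro j hj
        have : x j ≠ z := (Finset.mem_filter.mp hj).2
        exact abs_pos.mpr (sub_ne_zero.mpr this)
      · norm_num
    have hδle : ∀ j : Fin n, x j ≠ z → δ ≤ |x j - z| := by
      intro j hj
      have hjS : j ∈ S := Finset.mem_filter.mpr ⟨Finset.mem_univ _, hj⟩
      rw [hδdef]
      rw [dif_pos ⟨j, hjS⟩]
      exact Finset.inf'_le _ hjS
    have hne_right : ∀ u ∈ Set.Ioo z (z + δ), P u ≠ 0 := by
      intro u hu h0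
      obtain ⟨j, rfl⟩ := (hzeros u).mp h0
      have hxj : x j ≠ z := by
        intro h
        rw [h] at hu
        exact lt_irrefl z hu.1
      have h1 := hδle j hxj
      have h2 : |x j - z| = x j - z := abs_of_pos (by linarith [hu.1])
      rw [h2] at h1
      linarith [hu.2]
    have hne_left : ∀ u ∈ Set.Ioo (z - δ) z, P u ≠ 0 := by
      intro u hu h0
      obtain ⟨j, rfl⟩ := (hzeros u).mp h0
      have hxj : x j ≠ z := by
        intro h
        rw [h] at hu
        exact lt_irrefl z hu.2
      have h1 := hδle j hxj
      have h2 : |x j - z| = -(x j - z) := abs_of_neg (by linarith [hu.2])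
      rw [h2] at h1
      linarith [hu.1]
    obtain ⟨εr, hepsr, hsolr⟩ := center_core_right g P hgc hg0 hP z δ hδpos hPz hne_right
    obtain ⟨εl, hepsl, hsoll⟩ := center_core_left g P hgc hg0 hP z δ hδpos hPz hne_left
    refine ⟨min εr εl, lt_min hepsr hepsl, ?_⟩
    intro ρ hρ
    rcases lt_trichotomy ρ z with hlt | heq | hgt
    · -- ρ < z
      have : ρ ∈ Set.Ioo (z - εl) z := by
        constructor
        · have : |ρ - z| = -(ρ - z) := abs_of_neg (by linarith)
          have h2 : -(ρ - z) < min εr εl := this ▸ hρ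
          have h3 : min εr εl ≤ εl := min_le_right _ _
          linarith
        · exact hlt
      obtain ⟨γ, hγsol, hγ0, hγper⟩ := hsoll ρ this
      refine ⟨γ, fun t ht => ?_, hγ0, hγper⟩
      have := hγsol t ht
      rwa [hgeq ht] at this
    · -- ρ = z : constant solution
      refine ⟨fun _ => ρ, fun t ht => ?_, rfl, rfl⟩
      show HasDerivWithinAt (fun _ => ρ) (f t * P ρ) (Set.Icc (0:ℝ) 1) t
      rw [heq, hPz, mul_zero]
      exact hasDerivWithinAt_const _ _ _
    · -- ρ > z
      have : ρ ∈ Set.Ioo z (z + εr) := by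
        constructor
        · exact hgt
        · have : |ρ - z| = ρ - z := abs_of_pos (by linarith)
          have h2 : ρ - z < min εr εl := this ▸ hρ
          have h3 : min εr εl ≤ εr := min_le_left _ _
          linarith
      obtain ⟨γ, hγsol, hγ0, hγper⟩ := hsolr ρ this
      refine ⟨γ, fun t ht => ?_, hγ0, hγper⟩
      have := hγsol t ht
      rwa [hgeq ht] at this
  · -- part (ii)
    intro hfne
    constructor
    · intro γ hγ hper
      have hsolg : ∀ t ∈ Icc (0:ℝ) 1, HasDerivWithinAt γ (g t * P (γ t)) (Icc (0:ℝ) 1) t := by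
        intro t ht
        have := hγ t ht
        rwa [← hgeq ht] at this
      by_cases hcase : ∀ t ∈ Icc (0:ℝ) 1, P (γ t) ≠ 0
      · exfalso
        apply hfne
        rw [← hint_eq]
        exact integral_eq_zero_of_periodic g P γ hgc hP.continuous hsolg hper hcase
      · push_neg at hcase
        obtain ⟨t₀, ht₀, h0⟩ := hcase
        obtain ⟨i, hi⟩ := (hzeros (γ t₀)).mp h0
        refine ⟨i, ?_⟩
        exact eq_const_of_hits_zero g P γ hgc Cg hCg hP hsolg t₀ ht₀ (x i)
          ((hzeros (x i)).mpr ⟨i, rfl⟩) hi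
    · intro i hd
      exact mul_ne_zero hd hfne
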